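/- Let F be a field of characteristic zero, let n, k, d be natural numbers with k ≥ 1, and let a₁, …, aₙ ∈ F^k (where F^k carries coordinatewise ring operations and its natural F-vector space structure). Consider the polynomial D(x) = (1 + a₁x₁ + ⋯ + aₙxₙ)^d in the polynomial ring (F^k)[x₁, …, xₙ], where 1 denotes the all-ones vector. Then D has a cone-closed basis: there exists a cone-closed finite set B of exponent vectors in ℕ^n such that the coefficients {coeff_{x^m}(D) : m ∈ B} ⊆ F^k form an F-basis of the F-linear span of all coefficients of D. -/

import Mathlib

/-!
The coefficient of `x^m` in `D` is `(d choose |m|) * multinomial(m) * a^m`, where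
`a^m = ∏ aᵢ^mᵢ`; in characteristic zero it is a nonzero multiple of `a^m` exactly when
`|m| ≤ d`. Take for `B` the `m` with `|m| ≤ d` such that `a^m` is not in the span of the `a^e`
with `e` smaller in the degree-lexicographic order. This greedy choice is a basis of the span,
and it is cone-closed: if `a^e` is a combination of smaller `a^e'`, multiplying by `a^f` writes
`a^(e+f)` as a combination of the `a^(e'+f)`, which are still smaller because monomial orders
are compatible with addition.
-/

open MvPolynomial Finsupp Submodule Set Function

theorem MvPolynomial.coeff_one_add_sum_C_mul_X_pow {R σ : Type*} [CommSemiring R] [Fintype σ]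
    (a : σ → R) (d : ℕ) (m : σ →₀ ℕ) :
    coeff m ((1 + ∑ i, C (a i) * X i) ^ d) =
      (d.choose m.degree * m.multinomial) • m.prod fun i k => a i ^ k := by
  have hdeg : (m.sum fun _ k => k) = m.degree := rfl
  simp_rw [← smul_eq_C_mul, add_comm (1 : MvPolynomial σ R), add_pow, one_pow, mul_one,
    coeff_sum, ← nsmul_eq_mul', coeff_smul, coeff_linearCombination_X_pow_of_fintype, smul_ite,
    smul_zero, Finset.sum_ite_eq, hdeg, Finset.mem_range, Nat.lt_succ_iff]
  split_ifs with hm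
  · rw [← nsmul_eq_mul, smul_smul]
  · rw [Nat.choose_eq_zero_of_lt (not_le.1 hm), zero_mul, zero_smul]

section Greedy

variable (K : Type*) {ι κ M : Type*} [Field K] [AddCommGroup M] [Module K M] [LinearOrder κ]

def greedyIndices (r : ι → κ) (v : ι → M) : Set ι :=
  {i | v i ∉ span K (v '' {j | r j < r i})}

variable {K} {r : ι → κ} (v : ι → M)

theorem linearIndepOn_greedyIndices (hr : Injective r) :
    LinearIndepOn K v (greedyIndices K r v) := by
  classical
  refine linearIndepOn_of_finite _ fun t ht ht_fin => ?_
  lift t to Finset ι using ht_fin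
  induction t using Finset.induction_on_max_value r with
  | empty => simp
  | insert i t hit hmax ih =>
    rw [Finset.coe_insert] at ht ⊢
    have hlt : (t : Set ι) ⊆ {j | r j < r i} := fun j hj =>
      (hmax j hj).lt_of_ne fun h => hit (hr h ▸ hj)
    exact (linearIndepOn_insert (by simpa using hit)).2 ⟨ih ((subset_insert _ _).trans ht),
      fun hi => ht (mem_insert _ _) (span_mono (image_mono hlt) hi)⟩

theorem mem_span_image_inter_greedyIndices [WellFoundedLT κ] {S : Set ι}
    (hS : ∀ i ∈ S, ∀ j, r j < r i → j ∈ S) {i : ι} (hi : i ∈ S) :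
    v i ∈ span K (v '' (S ∩ greedyIndices K r v)) := by
  induction i using (InvImage.wf r wellFounded_lt).induction with
  | _ i ih =>
  by_cases hg : i ∈ greedyIndices K r v
  · exact subset_span (mem_image_of_mem v ⟨hi, hg⟩)
  · refine span_le.2 ?_ (not_not.1 hg)
    rintro _ ⟨j, hj, rfl⟩
    exact ih j hj (hS i hi j hj)

theorem span_image_inter_greedyIndices [WellFoundedLT κ] {S : Set ι}
    (hS : ∀ i ∈ S, ∀ j, r j < r i → j ∈ S) :
    span K (v '' (S ∩ greedyIndices K r v)) = span K (v '' S) :=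
  le_antisymm (span_mono (image_mono inter_subset_left)) <| span_le.2 <| by
    rintro _ ⟨i, hi, rfl⟩
    exact mem_span_image_inter_greedyIndices v hS hi

theorem isLowerSet_greedyIndices {σ A : Type*} [CommRing A] [Algebra K A] (ord : MonomialOrder σ)
    {v : (σ →₀ ℕ) → A} (hv : ∀ e f, v (e + f) = v e * v f) :
    IsLowerSet (greedyIndices K ord.toSyn v) := by
  intro f e hef hf he
  obtain ⟨g, rfl⟩ := exists_add_of_le hef
  have hmul := apply_mem_span_image_of_mem_span (LinearMap.mulRight K (v g)) he
  rw [LinearMap.mulRight_apply, ← hv, image_image] at hmul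
  refine hf (span_mono ?_ hmul)
  rintro _ ⟨j, hj, rfl⟩
  refine ⟨j + g, ?_, by simp [hv]⟩
  show ord.toSyn (j + g) < ord.toSyn (e + g)
  rw [map_add, map_add]
  exact add_lt_add_left hj _

end Greedy

section SMul

variable {K ι M : Type*} [Field K] [AddCommGroup M] [Module K M] {c : ι → K} (v : ι → M)
  {s : Set ι}

theorem span_image_smul_of_ne_zero (hc : ∀ i ∈ s, c i ≠ 0) :
    span K ((fun i => c i • v i) '' s) = span K (v '' s) := by
  refine le_antisymm (span_le.2 ?_) (span_le.2 ?_) <;> rintro _ ⟨i, hi, rfl⟩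
  · exact smul_mem _ _ (subset_span (mem_image_of_mem v hi))
  · simpa [smul_smul, inv_mul_cancel₀ (hc i hi)] using
      smul_mem _ (c i)⁻¹ (subset_span (mem_image_of_mem (fun i => c i • v i) hi))

theorem span_range_smul_eq (hc : ∀ i, c i ≠ 0 ↔ i ∈ s) :
    span K (range fun i => c i • v i) = span K (v '' s) := by
  rw [← span_image_smul_of_ne_zero v fun i => (hc i).2]
  refine le_antisymm (span_le.2 ?_) (span_mono (image_subset_range _ _))
  rintro _ ⟨i, rfl⟩
  by_cases hi : i ∈ s
  · exact subset_span (mem_image_of_mem _ hi)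
  · simp [not_not.1 (mt (hc i).1 hi)]

theorem LinearIndepOn.smul_of_ne_zero (hv : LinearIndepOn K v s) (hc : ∀ i ∈ s, c i ≠ 0) :
    LinearIndepOn K (fun i => c i • v i) s :=
  hv.units_smul fun i : s => Units.mk0 (c i) (hc i i.2)

end SMul

theorem diagonal_depth3_cone_closed_basis_general
    (F : Type*) [Field F] [CharZero F] (n k d : ℕ)
    (a : Fin n → (Fin k → F))
    (D : MvPolynomial (Fin n) (Fin k → F))
    (hD : D = (1 + ∑ i, MvPolynomial.C (a i) * MvPolynomial.X i) ^ d) :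
    ∃ B : Finset (Fin n →₀ ℕ),
      (∀ m ∈ B, ∀ e : Fin n →₀ ℕ, e ≤ m → e ∈ B) ∧
      LinearIndependent F (fun m : B => MvPolynomial.coeff (m : Fin n →₀ ℕ) D) ∧
      Submodule.span F ((fun m => MvPolynomial.coeff m D) '' ↑B) =
        Submodule.span F (Set.range fun m => MvPolynomial.coeff m D) := by
  set v : (Fin n →₀ ℕ) → (Fin k → F) := fun m => m.prod fun i e => a i ^ e
  set c : (Fin n →₀ ℕ) → F := fun m => ((d.choose m.degree * m.multinomial : ℕ) : F)
  set S := {m : Fin n →₀ ℕ | m.degree ≤ d}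
  set G := greedyIndices F MonomialOrder.degLex.toSyn v
  have hv : ∀ e f, v (e + f) = v e * v f := fun e f =>
    prod_add_index' (by simp) fun _ _ _ => pow_add _ _ _
  have hcoeff : (fun m => coeff m D) = fun m => c m • v m := funext fun m => by
    rw [hD, coeff_one_add_sum_C_mul_X_pow, ← Nat.cast_smul_eq_nsmul F]
  have hc : ∀ m, c m ≠ 0 ↔ m ∈ S := fun m => by
    simpa [c, S, Nat.choose_eq_zero_iff, multinomial_eq] using
      fun _ => (Nat.multinomial_pos _ _).ne'
  have hS_lower : IsLowerSet S := fun _ _ h hm => (degree_mono h).trans hm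
  have hS_degLex :
      ∀ m ∈ S, ∀ e, MonomialOrder.degLex.toSyn e < MonomialOrder.degLex.toSyn m → e ∈ S :=
    fun m hm e he => (DegLex.monotone_degree he.le).trans hm
  have hfin : (S ∩ G).Finite := (finite_of_degree_le d).subset inter_subset_left
  have hind : LinearIndepOn F (fun m => coeff m D) (S ∩ G) := by
    rw [hcoeff]
    exact ((linearIndepOn_greedyIndices v MonomialOrder.degLex.toSyn.injective).mono
      inter_subset_right).smul_of_ne_zero v fun m hm => (hc m).2 hm.1
  refine ⟨hfin.toFinset, fun m hm e he => ?_, by rwa [← hfin.coe_toFinset] at hind, ?_⟩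
  · have hlower :=
      hS_lower.inter (isLowerSet_greedyIndices (K := F) MonomialOrder.degLex hv)
    simpa using hlower he (by simpa using hm)
  · rw [hcoeff, Finite.coe_toFinset, span_image_smul_of_ne_zero v fun m hm => (hc m).2 hm.1,
      span_range_smul_eq v hc, span_image_inter_greedyIndices v hS_degLex]

/-- **Diagonal depth-3 circuits have a cone-closed basis.** Over a characteristic
zero field `F`, the polynomial `D = (1 + a₁x₁ + ⋯ + aₙxₙ)^d` with coefficients in
the `F`-algebra `F^k` has a cone-closed set `B` of exponent vectors whose
coefficients form an `F`-basis of the span of all coefficients of `D`. -/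
theorem diagonal_depth3_cone_closed_basis
    (F : Type*) [Field F] [CharZero F] (n k d : ℕ) (hk : 1 ≤ k)
    (a : Fin n → (Fin k → F))
    (D : MvPolynomial (Fin n) (Fin k → F))
    (hD : D = (1 + ∑ i, MvPolynomial.C (a i) * MvPolynomial.X i) ^ d) :
    ∃ B : Finset (Fin n →₀ ℕ),
      (∀ m ∈ B, ∀ e : Fin n →₀ ℕ, e ≤ m → e ∈ B) ∧
      LinearIndependent F (fun m : B => MvPolynomial.coeff (m : Fin n →₀ ℕ) D) ∧
      Submodule.span F ((fun m => MvPolynomial.coeff m D) '' ↑B) =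
        Submodule.span F (Set.range fun m => MvPolynomial.coeff m D) :=
  diagonal_depth3_cone_closed_basis_general F n k d a D hD
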